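/- Let (Ω, 𝓕, μ) be a standard Borel probability space, T : Ω → ℝ measurable, E a standard Borel space, X : Ω → E measurable, L > 0 fixed, and H : E → (ℝ → ℝ≥0) with (x,s) ↦ H(x)(s) jointly measurable. Assume that for (μ.map X)-almost every x, the regular conditional distribution of T given X = x is absolutely continuous with respect to Lebesgue measure with density t ↦ 1_{[0,∞)}(t) · H(x)(t) · exp(−∫₀ᵗ H(x)(s) ds). Then for every t ∈ [0, L), defining the propensity process Θ_t : Ω → (ℝ → ℝ≥0) by Θ_t(ω)(s) = H(X(ω))(s) for s ∈ [0, t) and Θ_t(ω)(s) = 0 for s ∉ [0, t), the restricted treatment time U_t = min(T, t) is conditionally independent of X given the σ-algebra generated by Θ_t. -/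

import Mathlib

open MeasureTheory ProbabilityTheory

open Set

open scoped ENNReal

/-!
Given `X = x`, the treatment time has the survival law with hazard `H x`, so `min T t` has the
image of that law under `min · t`. This image only sees the hazard on `[0, t)` up to Lebesgue-null
changes, i.e. the propensity path `Θ_t`. Because evaluation of paths is not jointly measurable for
the product σ-algebra, "is a function of `Θ_t`" is made precise by averaging over the
conditional-expectation kernel given `σ(Θ_t)`, which almost surely charges only paths a.e. equal to
`Θ_t`. Finally, if the conditional law of `U` given `X` is measurable for some `m ≤ σ(X)`, then
`U` and `X` are conditionally independent given `m` (pull out what is known, twice).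
-/

namespace MeasureTheory

lemma Measure.map_min_eq_of_restrict_Iio_eq {α : Type*} [TopologicalSpace α] [LinearOrder α]
    [OrderClosedTopology α] [SecondCountableTopology α] [MeasurableSpace α]
    [OpensMeasurableSpace α] {P Q : Measure α} [IsFiniteMeasure P] [IsFiniteMeasure Q] {t : α}
    (huniv : P univ = Q univ) (h : P.restrict (Iio t) = Q.restrict (Iio t)) :
    P.map (fun u => min u t) = Q.map (fun u => min u t) := by
  have hmin : Measurable fun u : α => min u t := measurable_id.min measurable_const
  ext A hA
  rw [Measure.map_apply hmin hA, Measure.map_apply hmin hA]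
  by_cases htA : t ∈ A
  · have hsub : ((fun u => min u t) ⁻¹' A)ᶜ ⊆ Iio t := fun u hu =>
      not_le.1 fun htu => hu (by simpa [min_eq_right htu] using htA)
    rw [← compl_compl ((fun u => min u t) ⁻¹' A),
      measure_compl (hmin hA).compl (measure_ne_top _ _), measure_compl (hmin hA).compl (measure_ne_top _ _), ← Measure.restrict_eq_self P hsub,
      ← Measure.restrict_eq_self Q hsub, h, huniv]
  · have hsub : (fun u => min u t) ⁻¹' A ⊆ Iio t := fun u hu =>
      not_le.1 fun htu => htA (by simpa [min_eq_right htu] using hu)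
    rw [← Measure.restrict_eq_self P hsub, ← Measure.restrict_eq_self Q hsub, h]

lemma ae_restrict_eq_of_ite_ae_eq {α β : Type*} [MeasurableSpace α] [Zero β] {μ : Measure α}
    {s : Set α} [DecidablePred (· ∈ s)] (hs : MeasurableSet s) {f g : α → β}
    (h : (fun a => if a ∈ s then f a else 0) =ᵐ[μ] fun a => if a ∈ s then g a else 0) :
    f =ᵐ[μ.restrict s] g := by
  rw [Filter.EventuallyEq, ae_restrict_iff' hs]
  filter_upwards [h] with a ha has
  simpa [has] using ha

end MeasureTheory

noncomputable def hazardDensity (h : ℝ → NNReal) : ℝ → ℝ≥0∞ := fun u =>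
  Set.indicator (Set.Ici (0 : ℝ))
    (fun v => ENNReal.ofReal ((h v : ℝ) * Real.exp (-∫ s in (0 : ℝ)..v, (h s : ℝ)))) u

lemma hazardDensity_ae_eq {h₁ h₂ : ℝ → NNReal} {t : ℝ}
    (hh : h₁ =ᵐ[volume.restrict (Ico 0 t)] h₂) :
    hazardDensity h₁ =ᵐ[volume.restrict (Iio t)] hazardDensity h₂ := by
  rw [Filter.EventuallyEq, ae_restrict_iff' measurableSet_Ico] at hh
  have hcum : ∀ u ∈ Ico 0 t, ∫ s in (0 : ℝ)..u, (h₁ s : ℝ) = ∫ s in (0 : ℝ)..u, (h₂ s : ℝ) :=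
    fun u hu => intervalIntegral.integral_congr_ae <| by
      filter_upwards [hh] with s hs hsu
      rw [uIoc_of_le hu.1] at hsu
      rw [hs ⟨hsu.1.le, hsu.2.trans_lt hu.2⟩]
  rw [Filter.EventuallyEq, ae_restrict_iff' measurableSet_Iio]
  filter_upwards [hh] with u hu hut
  by_cases h0 : 0 ≤ u
  · simp [hazardDensity, h0, hu ⟨h0, hut⟩, hcum u ⟨h0, hut⟩]
  · simp [hazardDensity, h0]

lemma map_min_eq_of_hazard_ae_eq {P Q : Measure ℝ} [IsProbabilityMeasure P]
    [IsProbabilityMeasure Q] {h₁ h₂ : ℝ → NNReal} {t : ℝ}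
    (hP : P = volume.withDensity (hazardDensity h₁))
    (hQ : Q = volume.withDensity (hazardDensity h₂))
    (hh : h₁ =ᵐ[volume.restrict (Ico 0 t)] h₂) :
    P.map (fun u => min u t) = Q.map (fun u => min u t) := by
  refine Measure.map_min_eq_of_restrict_Iio_eq (by simp) ?_
  rw [hP, hQ, restrict_withDensity measurableSet_Iio, restrict_withDensity measurableSet_Iio]
  exact withDensity_congr_ae (hazardDensity_ae_eq hh)

namespace ProbabilityTheory

section CondExpKernel

variable {E : Type*} {m' : MeasurableSpace E} [mE : MeasurableSpace E] [StandardBorelSpace E]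
  {ν : Measure E} [IsFiniteMeasure ν]

lemma ae_ae_condExpKernel_of_forall (hm : m' ≤ mE) {Q : E → E → Prop}
    (hQ : MeasurableSet[m'.prod mE] {p | Q p.1 p.2}) (hrefl : ∀ x, Q x x) :
    ∀ᵐ x ∂ν, ∀ᵐ y ∂condExpKernel ν m' x, Q x y := by
  have hdiag : ∀ᵐ p ∂(@Measure.map E (E × E) mE (m'.prod mE) Function.diag ν), Q p.1 p.2 :=
    (@ae_map_iff E (E × E) mE (m'.prod mE) ν _
      (@Measurable.aemeasurable _ _ _ (m'.prod mE) _ _ ((measurable_id'' hm).prodMk measurable_id))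
      _ hQ).2 (ae_of_all _ hrefl)
  rw [← compProd_trim_condExpKernel hm] at hdiag
  exact ae_of_ae_trim hm (Measure.ae_ae_of_ae_compProd hdiag)

lemma ae_ae_condExpKernel_apply_eq {β : Type*} [MeasurableSpace β] [MeasurableEq β]
    (hm : m' ≤ mE) {h : E → β} (hh : Measurable[m'] h) :
    ∀ᵐ x ∂ν, ∀ᵐ y ∂condExpKernel ν m' x, h y = h x :=
  ae_ae_condExpKernel_of_forall hm
    (measurableSet_eq_fun ((hh.mono hm le_rfl).comp measurable_snd) (hh.comp measurable_fst))
    fun _ => rfl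

lemma ae_ae_condExpKernel_comap_ae_eq {ι β : Type*} [MeasurableSpace ι] [MeasurableSpace β]
    [MeasurableEq β] {ρ : Measure ι} [SFinite ρ] {φ : E → ι → β}
    (hφ : Measurable (Function.uncurry φ)) :
    ∀ᵐ x ∂ν, ∀ᵐ y ∂condExpKernel ν (MeasurableSpace.comap φ MeasurableSpace.pi) x,
      φ y =ᵐ[ρ] φ x := by
  have hm : MeasurableSpace.comap φ MeasurableSpace.pi ≤ mE :=
    (measurable_pi_lambda _ fun s => hφ.comp measurable_prodMk_right).comap_le
  -- Fubini needs the kernel on the ambient σ-algebra, where `(x, s) ↦ φ x s` is measurable.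
  let κ : Kernel E E := (condExpKernel ν _).comap id (measurable_id'' hm)
  have hκ : ∀ x, κ x = condExpKernel ν (MeasurableSpace.comap φ MeasurableSpace.pi) x :=
    fun _ => Kernel.comap_apply _ _ _
  have hcoord : ∀ s, ∀ᵐ p ∂(ν ⊗ₘ κ), φ p.2 s = φ p.1 s := fun s => by
    have hset : MeasurableSet {p : E × E | φ p.2 s = φ p.1 s} :=
      measurableSet_eq_fun (hφ.comp (measurable_snd.prodMk measurable_const) :)
        (hφ.comp (measurable_fst.prodMk measurable_const) :)
    have hφs : Measurable[MeasurableSpace.comap φ MeasurableSpace.pi] fun x => φ x s :=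
      (measurable_pi_apply s).comp (comap_measurable φ)
    rw [Measure.ae_compProd_iff hset]
    simpa only [hκ] using ae_ae_condExpKernel_apply_eq hm hφs
  have hset : MeasurableSet {q : (E × E) × ι | φ q.1.2 q.2 = φ q.1.1 q.2} :=
    measurableSet_eq_fun
      (hφ.comp ((measurable_snd.comp measurable_fst).prodMk measurable_snd) :)
      (hφ.comp ((measurable_fst.comp measurable_fst).prodMk measurable_snd) :)
  have hpath : ∀ᵐ p ∂(ν ⊗ₘ κ), ∀ᵐ s ∂ρ, φ p.2 s = φ p.1 s :=
    (Measure.ae_ae_comm hset).2 (ae_of_all _ hcoord)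
  simpa only [hκ, Filter.EventuallyEq] using Measure.ae_ae_of_ae_compProd hpath

lemma ae_ae_condExpKernel_of_ae (hm : m' ≤ mE) {P : E → Prop} (hP : ∀ᵐ x ∂ν, P x) :
    ∀ᵐ x ∂ν, ∀ᵐ y ∂condExpKernel ν m' x, P y := by
  rw [← condExpKernel_comp_trim (μ := ν) hm] at hP
  exact ae_of_ae_trim hm (Measure.ae_ae_of_ae_comp hP)

lemma exists_measurable_ae_eq_of_ae_ae_condExpKernel {f : E → ℝ≥0∞} (hf : Measurable f)
    (h : ∀ᵐ x ∂ν, ∀ᵐ y ∂condExpKernel ν m' x, f y = f x) :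
    ∃ g : E → ℝ≥0∞, Measurable[m'] g ∧ f =ᵐ[ν] g := by
  refine ⟨fun x => ∫⁻ y, f y ∂condExpKernel ν m' x, hf.lintegral_kernel, ?_⟩
  filter_upwards [h] with x hx
  rw [lintegral_congr_ae hx, lintegral_const, measure_univ, mul_one]

end CondExpKernel

section CondIndep

variable {Ω : Type*} [mΩ : MeasurableSpace Ω] {μ : Measure Ω} [IsFiniteMeasure μ]

lemma condIndep_of_aestronglyMeasurable_condExp_indicator [StandardBorelSpace Ω]
    {m m₁ m₂ : MeasurableSpace Ω} (hm : m ≤ m₂) (hm₁ : m₁ ≤ mΩ) (hm₂ : m₂ ≤ mΩ)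
    (h : ∀ s, MeasurableSet[m₁] s → AEStronglyMeasurable[m] (μ⟦s | m₂⟧) μ) :
    CondIndep m m₁ m₂ (hm.trans hm₂) μ := by
  rw [condIndep_iff _ _ _ _ hm₁ hm₂]
  intro s t hs ht
  set ind : Ω → ℝ := t.indicator fun _ => 1
  have hind_bdd : MemLp ind ∞ μ := (memLp_top_const 1).indicator (hm₂ _ ht)
  have hind_int : Integrable ind μ := (integrable_const 1).indicator (hm₂ _ ht)
  have hs_eq : μ⟦s | m⟧ =ᵐ[μ] μ⟦s | m₂⟧ :=
    (condExp_condExp_of_le hm hm₂).symm.trans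
      (condExp_of_aestronglyMeasurable' (hm.trans hm₂) (h s hs) integrable_condExp)
  calc μ⟦s ∩ t | m⟧
      =ᵐ[μ] μ[μ[ind * s.indicator fun _ => 1 | m₂] | m] := by
        have hinter : (t ∩ s).indicator (fun _ => (1 : ℝ)) = ind * s.indicator fun _ => 1 :=
          Set.inter_indicator_one
        rw [Set.inter_comm, hinter]
        exact (condExp_condExp_of_le hm hm₂).symm
    _ =ᵐ[μ] μ[μ⟦s | m₂⟧ * ind | m] := by
        refine condExp_congr_ae ?_
        rw [mul_comm (μ⟦s | m₂⟧)]
        exact condExp_mul_of_stronglyMeasurable_left (stronglyMeasurable_const.indicator ht)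
          (((integrable_const 1).indicator (hm₁ _ hs)).mul_of_top_right hind_bdd)
          ((integrable_const 1).indicator (hm₁ _ hs))
    _ =ᵐ[μ] μ⟦s | m₂⟧ * μ⟦t | m⟧ :=
        condExp_mul_of_aestronglyMeasurable_left (h s hs)
          (integrable_condExp.mul_of_top_left hind_bdd) hind_int
    _ =ᵐ[μ] μ⟦s | m⟧ * μ⟦t | m⟧ := hs_eq.symm.mul (ae_eq_refl _)

lemma aestronglyMeasurable_condExp_preimage_of_condDistrib {β E : Type*}
    [MeasurableSpace β] [StandardBorelSpace β] [Nonempty β]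
    {m' : MeasurableSpace E} [mE : MeasurableSpace E] {Y : Ω → β} {X : Ω → E}
    (hY : Measurable Y) (hX : Measurable X) {A : Set β} (hA : MeasurableSet A)
    (hYX : ∃ g : E → ℝ≥0∞, Measurable[m'] g ∧ (fun x => condDistrib Y X μ x A) =ᵐ[μ.map X] g) :
    AEStronglyMeasurable[m'.comap X] (μ⟦Y ⁻¹' A | mE.comap X⟧) μ := by
  obtain ⟨g, hg, hYg⟩ := hYX
  refine ((hg.comp (comap_measurable X)).ennreal_toReal.aestronglyMeasurable).congr ?_
  filter_upwards [ae_of_ae_map hX.aemeasurable hYg, condDistrib_ae_eq_condExp hX hY hA]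
    with ω hω hω'
  rw [← hω', measureReal_def, hω]
  rfl

end CondIndep

end ProbabilityTheory

/-- Proposition 2: if the regular conditional distribution of the treatment time `T` given the
covariate history `X` has hazard function `H (X ω)`, then for every `t ∈ [0, L)` the restricted
treatment time `U_t = min (T, t)` is conditionally independent of `X` given the σ-algebra
generated by the propensity process `Θ_t` up to time `t`. -/
theorem condIndepFun_min_given_propensityProcess_upto
    {Ω E : Type*}
    [MeasurableSpace Ω] [StandardBorelSpace Ω]
    [MeasurableSpace E] [StandardBorelSpace E]
    (μ : Measure Ω) [IsProbabilityMeasure μ]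
    (T : Ω → ℝ) (X : Ω → E) (hT : Measurable T) (hX : Measurable X)
    (L : ℝ)
    (H : E → ℝ → NNReal) (hH : Measurable fun p : E × ℝ => H p.1 p.2)
    (hdens : ∀ᵐ x ∂(μ.map X), condDistrib T X μ x =
      volume.withDensity fun u : ℝ =>
        Set.indicator (Set.Ici (0 : ℝ))
          (fun v => ENNReal.ofReal
            ((H x v : ℝ) * Real.exp (-∫ s in (0 : ℝ)..v, (H x s : ℝ)))) u) :
    ∀ t ∈ Set.Ico (0 : ℝ) L,
      CondIndepFun
        (MeasurableSpace.comap
          (fun ω => fun s : ℝ => if s ∈ Set.Ico (0 : ℝ) t then H (X ω) s else 0) inferInstance)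
        (Measurable.comap_le (measurable_pi_lambda _ (fun s => by
          by_cases hs : s ∈ Set.Ico (0 : ℝ) t
          · simp only [if_pos hs]
            exact hH.comp (hX.prodMk measurable_const)
          · simp only [if_neg hs]
            exact measurable_const)))
        (fun ω => min (T ω) t) X μ := by
  intro t _
  let φ : E → ℝ → NNReal := fun x s => if s ∈ Set.Ico (0 : ℝ) t then H x s else 0
  have hφ : Measurable (Function.uncurry φ) :=
    Measurable.ite (measurable_snd measurableSet_Ico) hH measurable_const
  have hm : MeasurableSpace.comap φ MeasurableSpace.pi ≤ ‹MeasurableSpace E› :=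
    (measurable_pi_lambda _ fun s => hφ.comp measurable_prodMk_right).comap_le
  have hΘ : MeasurableSpace.comap (fun ω => φ (X ω)) MeasurableSpace.pi
      = MeasurableSpace.comap X (MeasurableSpace.comap φ MeasurableSpace.pi) :=
    (MeasurableSpace.comap_comp (f := φ) (g := X)).symm
  have hU : Measurable fun ω => min (T ω) t := hT.min measurable_const
  have hmin_meas : Measurable fun u : ℝ => min u t := measurable_id.min measurable_const
  have hmin : condDistrib (fun ω => min (T ω) t) X μ =ᵐ[μ.map X]
      (condDistrib T X μ).map fun u => min u t :=
    condDistrib_comp X hT.aemeasurable hmin_meas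
  rw [condIndepFun_iff_condIndep]
  refine condIndep_of_aestronglyMeasurable_condExp_indicator
    (hΘ ▸ MeasurableSpace.comap_mono hm) hU.comap_le hX.comap_le ?_
  rintro _ ⟨A, hA, rfl⟩
  rw [hΘ]
  refine aestronglyMeasurable_condExp_preimage_of_condDistrib hU hX hA
    (exists_measurable_ae_eq_of_ae_ae_condExpKernel (Kernel.measurable_coe _ hA) ?_)
  filter_upwards [ae_ae_condExpKernel_comap_ae_eq (ρ := volume) hφ,
    ae_ae_condExpKernel_of_ae hm (hmin.and hdens), hmin, hdens] with x hpath hgood hminx hdensx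
  filter_upwards [hpath, hgood] with y hxy hgoody
  rw [hminx, hgoody.1, Kernel.map_apply _ hmin_meas, Kernel.map_apply _ hmin_meas,
    map_min_eq_of_hazard_ae_eq hgoody.2 hdensx (ae_restrict_eq_of_ite_ae_eq measurableSet_Ico hxy)]
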